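/- arXiv:2603.16676 — 2 statements merged into one kernel-verified Lean document; each statement's English description precedes it below -/
import Mathlib

section
/- Fix t > 1 real and set s = t + 1/t. The Joukowski map J(w) = w + 1/w maps the doubly slit exterior {w ∈ ℂ : |w| > 1} ∖ ([−t,−1] ∪ [1,t]) bijectively onto ℂ ∖ [−s, s], where the real intervals are viewed as subsets of ℂ. -/
private lemma jk_mono (t x : ℝ) (ht : 0 < t) (hx : 0 < x) (htx : 1 < t * x) :
    x + x⁻¹ ≤ t + t⁻¹ ↔ x ≤ t := by
  have e1 : t*x*(x+x⁻¹) = t*x^2 + t := by field_simp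
  have e2 : t*x*(t+t⁻¹) = t^2*x + x := by field_simp
  constructor
  · intro h
    have h2 := mul_le_mul_of_nonneg_left h (mul_pos ht hx).le
    rw [e1, e2] at h2
    nlinarith
  · intro h
    have h2 : t*x^2 + t ≤ t^2*x + x := by nlinarith
    rw [← e1, ← e2] at h2
    exact le_of_mul_le_mul_left h2 (mul_pos ht hx)

private lemma jk_real (x : ℝ) : ((x:ℂ) + (x:ℂ)⁻¹) = ((x + x⁻¹ : ℝ) : ℂ) := by push_cast; ring

private lemma jk_im (w : ℂ) : (w + w⁻¹).im = w.im * (1 - 1/Complex.normSq w) := by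
  simp [Complex.add_im, Complex.inv_im]
  ring

private lemma jk_im_zero (w : ℂ) (hw : 1 < ‖w‖) (h : (w + w⁻¹).im = 0) :
    w.im = 0 := by
  have hn : 1 < Complex.normSq w := by
    rw [← Complex.sq_norm]; nlinarith
  rw [jk_im] at h
  rcases mul_eq_zero.1 h with h | h
  · exact h
  · exfalso
    have : 1/Complex.normSq w < 1 := by
      rw [div_lt_one (by linarith)]; exact hn
    linarith

private lemma jk_two (t : ℝ) (ht : 1 < t) : 2 < t + t⁻¹ := by
  have ht0 : (0:ℝ) < t := by linarith
  nlinarith [mul_inv_cancel₀ (ne_of_gt ht0)]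

/-- If `w` is real with `|w| > 1` and `w` is outside the slits, then `J(w)` avoids `[-s,s]`. -/
private lemma jk_real_case (t : ℝ) (ht : 1 < t) (w : ℂ) (hw : 1 < ‖w‖)
    (him : w.im = 0)
    (hs : ¬ (w.re ∈ Set.Icc (-t) (-1) ∨ w.re ∈ Set.Icc 1 t)) :
    ¬ ((w + w⁻¹).re ∈ Set.Icc (-(t + t⁻¹)) (t + t⁻¹)) := by
  have ht0 : (0:ℝ) < t := by linarith
  set x := w.re with hx
  have hwx : w = (x : ℂ) := Complex.ext rfl (by simpa using him)
  have habs : 1 < |x| := by rwa [hwx, Complex.norm_real, Real.norm_eq_abs] at hw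
  have hre : (w + w⁻¹).re = x + x⁻¹ := by rw [hwx, jk_real]; simp
  rw [hre]
  rintro ⟨h1, h2⟩
  rcases lt_abs.mp habs with hx1 | hx1
  · -- 1 < x, so x ≤ t would put w in the right slit
    have hxt : x ≤ t := (jk_mono t x ht0 (by linarith) (by nlinarith)).1 h2
    exact hs (Or.inr ⟨le_of_lt hx1, hxt⟩)
  · -- 1 < -x
    set y := -x with hy
    have h2' : y + y⁻¹ ≤ t + t⁻¹ := by
      have : x + x⁻¹ = -(y + y⁻¹) := by rw [hy, inv_neg]; ring
      rw [this] at h1; linarith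
    have hyt : y ≤ t := (jk_mono t y ht0 (by linarith) (by nlinarith)).1 h2'
    exact hs (Or.inl ⟨by linarith [hyt], by linarith [hx1]⟩)

/-- Converse: if `w` is real in a slit (with `|w| > 1`), `J(w)` lands in `[-s,s]`. -/
private lemma jk_real_case' (t : ℝ) (ht : 1 < t) (w : ℂ) (hw : 1 < ‖w‖)
    (him : w.im = 0)
    (hs : w.re ∈ Set.Icc (-t) (-1) ∨ w.re ∈ Set.Icc 1 t) :
    (w + w⁻¹).im = 0 ∧ (w + w⁻¹).re ∈ Set.Icc (-(t + t⁻¹)) (t + t⁻¹) := by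
  have ht0 : (0:ℝ) < t := by linarith
  set x := w.re with hx
  have hwx : w = (x : ℂ) := Complex.ext rfl (by simpa using him)
  have habs : 1 < |x| := by rwa [hwx, Complex.norm_real, Real.norm_eq_abs] at hw
  have hre : (w + w⁻¹).re = x + x⁻¹ := by rw [hwx, jk_real]; simp
  have himz : (w + w⁻¹).im = 0 := by rw [hwx, jk_real]; simp
  refine ⟨himz, ?_, ?_⟩ <;> rw [hre] <;>
    rcases hs with ⟨ha, hb⟩ | ⟨ha, hb⟩
  · -- x ∈ [-t,-1] : x + x⁻¹ ≥ -(t+t⁻¹)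
    have hy : (-x) + (-x)⁻¹ ≤ t + t⁻¹ :=
      (jk_mono t (-x) ht0 (by linarith) (by nlinarith)).2 (by linarith)
    rw [inv_neg] at hy
    linarith
  · -- x ∈ [1,t] : x + x⁻¹ ≥ -(t+t⁻¹) since positive
    have : 0 < x⁻¹ := inv_pos.2 (by linarith)
    have : 0 < t⁻¹ := inv_pos.2 ht0
    linarith
  · -- x ∈ [-t,-1] : x + x⁻¹ ≤ t+t⁻¹ since negative
    have : x⁻¹ < 0 := inv_neg''.2 (by linarith)
    have : 0 < t⁻¹ := inv_pos.2 ht0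
    linarith
  · exact (jk_mono t x ht0 (by linarith) (by nlinarith)).2 hb

/-- For `t > 1` and `s = t + 1/t`, the Joukowski map `J(w) = w + 1/w` maps the doubly
slit exterior `{|w| > 1} ∖ ([−t,−1] ∪ [1,t])` bijectively onto `ℂ ∖ [−s,s]`. -/
theorem joukowski_doubly_slit (t : ℝ) (ht : 1 < t) :
    Set.BijOn (fun w : ℂ => w + w⁻¹)
      ({w : ℂ | 1 < ‖w‖} \
        ({z : ℂ | z.im = 0 ∧ z.re ∈ Set.Icc (-t) (-1)} ∪
         {z : ℂ | z.im = 0 ∧ z.re ∈ Set.Icc 1 t}))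
      ({z : ℂ | z.im = 0 ∧ z.re ∈ Set.Icc (-(t + t⁻¹)) (t + t⁻¹)}ᶜ) := by
  have ht0 : (0:ℝ) < t := by linarith
  constructor
  · -- MapsTo
    rintro w ⟨hw, hslit⟩
    simp only [Set.mem_setOf_eq] at hw
    simp only [Set.mem_compl_iff, Set.mem_setOf_eq]
    rintro ⟨him, hre⟩
    have himw : w.im = 0 := jk_im_zero w hw him
    have hs : ¬ (w.re ∈ Set.Icc (-t) (-1) ∨ w.re ∈ Set.Icc 1 t) := by
      rintro (h | h)
      · exact hslit (Or.inl ⟨himw, h⟩)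
      · exact hslit (Or.inr ⟨himw, h⟩)
    exact jk_real_case t ht w hw himw hs hre
  constructor
  · -- InjOn
    rintro w1 ⟨hw1, _⟩ w2 ⟨hw2, _⟩ heq
    simp only [Set.mem_setOf_eq] at hw1 hw2
    have h1 : w1 ≠ 0 := by
      intro h; rw [h] at hw1; simp at hw1; linarith
    have h2 : w2 ≠ 0 := by
      intro h; rw [h] at hw2; simp at hw2; linarith
    simp only at heq
    have key : (w1 - w2) * (w1 * w2 - 1) = 0 := by
      have h := heq
      field_simp at h
      linear_combination h
    rcases mul_eq_zero.1 key with h | h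
    · exact sub_eq_zero.1 h
    · exfalso
      have : ‖w1 * w2‖ = 1 := by
        rw [sub_eq_zero.1 h]; simp
      rw [norm_mul] at this
      nlinarith [norm_nonneg w1, norm_nonneg w2]
  · -- SurjOn
    rintro z hz
    simp only [Set.mem_compl_iff, Set.mem_setOf_eq] at hz
    obtain ⟨u, hu⟩ : ∃ u : ℂ, u ^ 2 = z ^ 2 - 4 :=
      IsAlgClosed.exists_pow_nat_eq (z ^ 2 - 4) (n := 2) (by norm_num)
    set w1 : ℂ := (z + u) / 2 with hw1d
    set w2 : ℂ := (z - u) / 2 with hw2d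
    have hprod : w1 * w2 = 1 := by
      rw [hw1d, hw2d]
      have : (z + u) / 2 * ((z - u) / 2) = (z^2 - u^2)/4 := by ring
      rw [this, hu]; ring
    have hsum : w1 + w2 = z := by rw [hw1d, hw2d]; ring
    have h1 : w1 ≠ 0 := by
      intro h; rw [h, zero_mul] at hprod; exact zero_ne_one hprod
    have h2 : w2 ≠ 0 := by
      intro h; rw [h, mul_zero] at hprod; exact zero_ne_one hprod
    have hinv1 : w1⁻¹ = w2 := by
      field_simp
      linear_combination -hprod
    have hinv2 : w2⁻¹ = w1 := by
      field_simp
      linear_combination -hprod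
    have habs : ‖w1‖ * ‖w2‖ = 1 := by
      rw [← norm_mul, hprod]; simp
    -- helper to conclude from a root with abs > 1
    have main : ∀ w : ℂ, 1 < ‖w‖ → w + w⁻¹ = z →
        z ∈ (fun w : ℂ => w + w⁻¹) ''
          ({w : ℂ | 1 < ‖w‖} \
            ({z : ℂ | z.im = 0 ∧ z.re ∈ Set.Icc (-t) (-1)} ∪
             {z : ℂ | z.im = 0 ∧ z.re ∈ Set.Icc 1 t})) := by
      intro w hw hwz
      refine ⟨w, ⟨hw, ?_⟩, hwz⟩
      rintro (⟨him, hre⟩ | ⟨him, hre⟩) <;>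
      · have := jk_real_case' t ht w hw him (by tauto)
        rw [hwz] at this
        exact hz this
    rcases lt_or_ge 1 (‖w1‖) with h | hle1
    · exact main w1 h (by rw [hinv1, hsum])
    rcases lt_or_ge 1 (‖w2‖) with h | hle2
    · exact main w2 h (by rw [hinv2]; rw [← hsum]; ring)
    -- both on unit circle: z ∈ [-2,2] ⊆ [-s,s], contradiction
    exfalso
    have e1 : ‖w1‖ = 1 := by
      nlinarith [norm_nonneg w1, norm_nonneg w2]
    have e2 : ‖w2‖ = 1 := by
      nlinarith [norm_nonneg w1, norm_nonneg w2]
    have hconj : w2 = starRingEnd ℂ w1 := by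
      rw [← hinv1, Complex.inv_def]
      rw [Complex.normSq_eq_norm_sq, e1]
      simp
    apply hz
    constructor
    · have : z.im = w1.im + w2.im := by rw [← hsum]; simp
      rw [this, hconj]
      simp
    · have hzre : z.re = 2 * w1.re := by
        rw [← hsum, hconj]
        simp [Complex.add_re]
        ring
      have hb : |w1.re| ≤ 1 := by
        rw [← e1]; exact Complex.abs_re_le_norm w1
      have hs2 : 2 < t + t⁻¹ := jk_two t ht
      rw [hzre]
      rcases abs_le.1 hb with ⟨hb1, hb2⟩
      constructor <;> [linarith; linarith]
end

section
/- Fix t > 1 real and set s = t + 1/t. The Joukowski map J(w) = w + 1/w maps the singly slit exterior {w ∈ ℂ : |w| > 1} ∖ [1,t] bijectively onto ℂ ∖ [−2, s]. -/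
private lemma jouk_im_eq_zero {w : ℂ} (hw : 1 < ‖w‖) (h : (w + w⁻¹).im = 0) :
    w.im = 0 := by
  have hns : 1 < Complex.normSq w := by
    have h1 := Complex.sq_norm w
    nlinarith [norm_nonneg w]
  rw [Complex.add_im, Complex.inv_im] at h
  have hns0 : Complex.normSq w ≠ 0 := by positivity
  have h2 : w.im * (Complex.normSq w - 1) = 0 := by
    field_simp at h
    linarith
  rcases mul_eq_zero.1 h2 with h3 | h3
  · exact h3
  · linarith

private lemma jouk_not_slit {t : ℝ} (ht : 1 < t) {z v : ℂ} (hJ : v + v⁻¹ = z)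
    (hz : ¬ (z.im = 0 ∧ z.re ∈ Set.Icc (-2) (t + t⁻¹))) :
    ¬ (v.im = 0 ∧ v.re ∈ Set.Icc 1 t) := by
  rintro ⟨him, hx1, hxt⟩
  apply hz
  have ht0 : (0:ℝ) < t := lt_trans one_pos ht
  have hx0 : v.re ≠ 0 := by intro h; rw [h] at hx1; norm_num at hx1
  have hxpos : (0:ℝ) < v.re := by linarith
  have hxi : v.re * v.re⁻¹ = 1 := mul_inv_cancel₀ hx0
  have hti : t * t⁻¹ = 1 := mul_inv_cancel₀ (ne_of_gt ht0)
  have hv : v = (v.re : ℂ) := Complex.ext rfl (by simp [him])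
  rw [hv] at hJ
  have hz' : z = ((v.re + v.re⁻¹ : ℝ) : ℂ) := by rw [← hJ]; push_cast; ring
  rw [hz']
  have hkey : (0:ℝ) ≤ (t - v.re) * (v.re * t - 1) :=
    mul_nonneg (by linarith) (by nlinarith)
  refine ⟨by simp, ?_, ?_⟩
  · simp only [Complex.ofReal_re]
    nlinarith [mul_pos hxpos hxpos]
  · simp only [Complex.ofReal_re]
    nlinarith [mul_pos hxpos ht0]

/-- For `t > 1` and `s = t + 1/t`, the Joukowski map `J(w) = w + 1/w` maps the singly
slit exterior `{|w| > 1} ∖ [1,t]` bijectively onto `ℂ ∖ [−2, s]`. -/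
theorem joukowski_singly_slit (t : ℝ) (ht : 1 < t) :
    Set.BijOn (fun w : ℂ => w + w⁻¹)
      ({w : ℂ | 1 < ‖w‖} \ {z : ℂ | z.im = 0 ∧ z.re ∈ Set.Icc 1 t})
      ({z : ℂ | z.im = 0 ∧ z.re ∈ Set.Icc (-2) (t + t⁻¹)}ᶜ) := by
  have ht0 : (0:ℝ) < t := lt_trans one_pos ht
  refine ⟨?_, ?_, ?_⟩
  · -- MapsTo
    rintro w ⟨hw, hslit⟩
    simp only [Set.mem_setOf_eq] at hw hslit
    simp only [Set.mem_compl_iff, Set.mem_setOf_eq]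
    rintro ⟨him, hre1, hre2⟩
    have hwim : w.im = 0 := jouk_im_eq_zero hw him
    set x := w.re with hx
    have hw' : w = (x : ℂ) := Complex.ext rfl (by simp [hwim])
    have hax : 1 < |x| := by rwa [hw', Complex.norm_real, Real.norm_eq_abs] at hw
    have hx0 : x ≠ 0 := by intro h; rw [h] at hax; norm_num at hax
    have hxi : x * x⁻¹ = 1 := mul_inv_cancel₀ hx0
    have hti : t * t⁻¹ = 1 := mul_inv_cancel₀ (ne_of_gt ht0)
    have hre : (w + w⁻¹).re = x + x⁻¹ := by
      rw [hw', show ((x:ℂ) + (x:ℂ)⁻¹) = ((x + x⁻¹ : ℝ) : ℂ) by push_cast; ring]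
      simp
    rw [hre] at hre1 hre2
    have hxIcc : ¬ (x ∈ Set.Icc 1 t) := fun h => hslit ⟨hwim, h⟩
    simp only [Set.mem_Icc, not_and, not_le] at hxIcc
    rcases lt_or_lt_iff_ne.2 hx0 with hneg | hpos
    · -- x < 0, so x < -1
      have hx1 : x < -1 := by rw [abs_of_neg hneg] at hax; linarith
      nlinarith [sq_nonneg (x + 1)]
    · have hx1 : 1 < x := by rwa [abs_of_pos hpos] at hax
      have hxt : t < x := hxIcc (le_of_lt hx1)
      have hkey : (0:ℝ) < (x - t) * (x * t - 1) :=
        mul_pos (by linarith) (by nlinarith)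
      nlinarith [mul_pos hpos ht0]
  · -- InjOn
    rintro w ⟨hw, -⟩ v ⟨hv, -⟩ h
    simp only [Set.mem_setOf_eq] at hw hv
    have hw0 : w ≠ 0 := by intro h0; rw [h0] at hw; simp at hw; linarith
    have hv0 : v ≠ 0 := by intro h0; rw [h0] at hv; simp at hv; linarith
    have h' : w + w⁻¹ = v + v⁻¹ := h
    have key : (w - v) * (w * v - 1) = (w + w⁻¹ - (v + v⁻¹)) * (w * v) := by
      field_simp
      ring
    rw [h', sub_self, zero_mul] at key
    rcases mul_eq_zero.1 key with h3 | h3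
    · exact sub_eq_zero.1 h3
    · exfalso
      have : ‖w * v‖ = 1 := by rw [sub_eq_zero.1 h3]; simp
      rw [norm_mul] at this
      nlinarith [norm_nonneg w]
  · -- SurjOn
    rintro z hz
    simp only [Set.mem_compl_iff, Set.mem_setOf_eq] at hz
    obtain ⟨u, hu⟩ : ∃ u : ℂ, u ^ 2 = z ^ 2 - 4 :=
      IsAlgClosed.exists_pow_nat_eq (z ^ 2 - 4) two_pos
    have hprod : ((z + u) / 2) * ((z - u) / 2) = 1 := by
      linear_combination (-(1:ℂ)/4) * hu
    set w : ℂ := (z + u) / 2 with hwdef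
    set w' : ℂ := (z - u) / 2 with hw'def
    have hsum : w + w' = z := by rw [hwdef, hw'def]; ring
    have hw0 : w ≠ 0 := by intro h0; rw [h0] at hprod; simp at hprod
    have hw'0 : w' ≠ 0 := by intro h0; rw [h0] at hprod; simp at hprod
    have hinv : w⁻¹ = w' := (eq_inv_of_mul_eq_one_right hprod).symm
    have hinv' : w'⁻¹ = w := (eq_inv_of_mul_eq_one_left hprod).symm
    have hJw : w + w⁻¹ = z := by rw [hinv]; exact hsum
    have hJw' : w' + w'⁻¹ = z := by rw [hinv', add_comm]; exact hsum
    have habs : ‖w‖ * ‖w'‖ = 1 := by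
      rw [← norm_mul, hprod, norm_one]
    rcases lt_trichotomy (‖w‖) 1 with hlt | heq | hgt
    · -- then |w'| > 1
      have h0 : 0 < ‖w‖ := norm_pos_iff.mpr hw0
      have hgt' : 1 < ‖w'‖ := by nlinarith
      exact ⟨w', ⟨hgt', jouk_not_slit ht hJw' hz⟩, hJw'⟩
    · exfalso
      apply hz
      have hns : Complex.normSq w = 1 := by
        rw [← Complex.sq_norm, heq, one_pow]
      have hinvc : w⁻¹ = (starRingEnd ℂ) w := by
        rw [Complex.inv_def, hns]; simp
      have hz2 : z = w + (starRingEnd ℂ) w := by rw [← hJw, hinvc]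
      have hre : z.re = 2 * w.re := by rw [hz2]; simp; ring
      have him : z.im = 0 := by rw [hz2]; simp
      have hwre : |w.re| ≤ 1 := by rw [← heq]; exact Complex.abs_re_le_norm w
      rw [abs_le] at hwre
      have hti : t * t⁻¹ = 1 := mul_inv_cancel₀ (ne_of_gt ht0)
      refine ⟨him, ?_, ?_⟩
      · rw [hre]; linarith [hwre.1]
      · rw [hre]; nlinarith [sq_nonneg (t - 1), hwre.2]
    · exact ⟨w, ⟨hgt, jouk_not_slit ht hJw hz⟩, hJw⟩
end
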